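/- arXiv:2004.10911 — 10 statements merged into one kernel-verified Lean document; each statement's English description precedes it below -/
import Mathlib

section
/- Let Ω be nonempty and U, Y, Z be uncertain variables with finite ranges such that U and Z are conditionally unrelated given Y (Markov chain U − Y − Z), i.e., ⟦U | Z = z, Y = y⟧ = ⟦U | Y = y⟧ for all (y, z) in the joint range of (Y, Z). Then min_{y ∈ ⟦Y⟧} |⟦U | Y = y⟧| ≤ min_{z ∈ ⟦Z⟧} |⟦U | Z = z⟧|, and consequently L(U → Z) ≤ L(U → Y) (data processing inequality). -/
open Set

/-- Conditional range ⟦X | Y = y⟧ = {X ω : Y ω = y}. -/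
def crange {Ω 𝕏 𝕐 : Type*} (X : Ω → 𝕏) (Y : Ω → 𝕐) (y : 𝕐) : Set 𝕏 :=
  {x | ∃ ω, Y ω = y ∧ X ω = x}

/-- min_{y ∈ ⟦Y⟧} |⟦X | Y = y⟧|. -/
noncomputable def minCond {Ω 𝕏 𝕐 : Type*} (X : Ω → 𝕏) (Y : Ω → 𝕐) : ℕ :=
  sInf ((fun y => (crange X Y y).ncard) '' Set.range Y)

/-- Non-stochastic brute-force guessing leakage
L(X → Y) = log₂(|⟦X⟧| / min_{y ∈ ⟦Y⟧} |⟦X|Y=y⟧|). -/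
noncomputable def leak {Ω 𝕏 𝕐 : Type*} (X : Ω → 𝕏) (Y : Ω → 𝕐) : ℝ :=
  Real.logb 2 (((Set.range X).ncard : ℝ) / (minCond X Y : ℝ))

/-- Maximal non-stochastic brute-force leakage (closed formula)
L⋆(X → Y) = log₂(|⟦X⟧| − min_{y∈⟦Y⟧}|⟦X|Y=y⟧| + 1). -/
noncomputable def maxLeak {Ω 𝕏 𝕐 : Type*} (X : Ω → 𝕏) (Y : Ω → 𝕐) : ℝ :=
  Real.logb 2 (((Set.range X).ncard : ℝ) - (minCond X Y : ℝ) + 1)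

lemma minCond_pos {Ω 𝕌 𝕍 : Type*} [Nonempty Ω] (U : Ω → 𝕌) (V : Ω → 𝕍)
    (hU : (Set.range U).Finite) : 0 < minCond U V := by
  obtain ⟨ω⟩ := ‹Nonempty Ω›
  have hne : ((fun v => (crange U V v).ncard) '' Set.range V).Nonempty :=
    ⟨(crange U V (V ω)).ncard, ⟨V ω, ⟨ω, rfl⟩, rfl⟩⟩
  obtain ⟨v, ⟨ω', rfl⟩, hv⟩ := Nat.sInf_mem hne
  rw [minCond, ← hv]
  exact Set.ncard_pos (hU.subset (by rintro u ⟨ω, _, hu⟩; exact ⟨ω, hu⟩)) |>.mpr ⟨U ω', ω', rfl, rfl⟩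

theorem stmt_2 {Ω 𝕌 𝕐 ℤt : Type*} [Nonempty Ω] (U : Ω → 𝕌) (Y : Ω → 𝕐) (Z : Ω → ℤt)
    (hU : (Set.range U).Finite) (hY : (Set.range Y).Finite) (hZ : (Set.range Z).Finite)
    (hMarkov : ∀ y z, (∃ ω, Y ω = y ∧ Z ω = z) →
      {u | ∃ ω, Z ω = z ∧ Y ω = y ∧ U ω = u} = crange U Y y) :
    minCond U Y ≤ minCond U Z ∧ leak U Z ≤ leak U Y := by
  -- main inequality
  have hmain : minCond U Y ≤ minCond U Z := by
    apply le_csInf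
    · obtain ⟨ω⟩ := ‹Nonempty Ω›
      exact ⟨(crange U Z (Z ω)).ncard, ⟨Z ω, ⟨ω, rfl⟩, rfl⟩⟩
    · rintro n ⟨z, ⟨ω₀, rfl⟩, rfl⟩
      have hsub : crange U Y (Y ω₀) ⊆ crange U Z (Z ω₀) := by
        rw [← hMarkov (Y ω₀) (Z ω₀) ⟨ω₀, rfl, rfl⟩]
        rintro u ⟨ω, hz, _, hu⟩
        exact ⟨ω, hz, hu⟩
      calc minCond U Y ≤ (crange U Y (Y ω₀)).ncard :=
            csInf_le (OrderBot.bddBelow _) ⟨Y ω₀, ⟨ω₀, rfl⟩, rfl⟩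
        _ ≤ (crange U Z (Z ω₀)).ncard :=
            Set.ncard_le_ncard hsub (hU.subset (by rintro u ⟨ω, _, hu⟩; exact ⟨ω, hu⟩))
  refine ⟨hmain, ?_⟩
  -- positivity of minCond
  have hUpos : (0 : ℝ) < (Set.range U).ncard := by
    have : (Set.range U).Nonempty := Set.range_nonempty U
    exact_mod_cast (Set.ncard_pos hU).mpr this
  have hZpos : (0 : ℝ) < (minCond U Z : ℝ) := by exact_mod_cast minCond_pos U Z hU
  have hYpos : (0 : ℝ) < (minCond U Y : ℝ) := by exact_mod_cast minCond_pos U Y hU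
  apply Real.logb_le_logb_of_le (by norm_num)
  · positivity
  · exact div_le_div_of_nonneg_left hUpos.le hYpos (by exact_mod_cast hmain)
end

section
/- Let Ω be nonempty, X : Ω → 𝕏 and Y : Ω → 𝕐 uncertain variables with finite ranges, and g : 𝕏 → 𝕌 any function; set U = g ∘ X. Then for every y ∈ ⟦Y⟧, |⟦X⟧| − |⟦U⟧| ≥ |⟦X | Y = y⟧| − |⟦U | Y = y⟧|. -/
open Set

theorem Set.ncard_image_le_ncard_image_add_ncard_sdiff {α β : Type*} (f : α → β) {A B : Set α}
    (hB : B.Finite) (hAB : A ⊆ B) : (f '' B).ncard ≤ (f '' A).ncard + (B \ A).ncard := by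
  have hcover : f '' B = f '' A ∪ f '' (B \ A) := by
    rw [← image_union, union_sdiff_cancel hAB]
  calc (f '' B).ncard = (f '' A ∪ f '' (B \ A)).ncard := by rw [hcover]
    _ ≤ (f '' A).ncard + (f '' (B \ A)).ncard := ncard_union_le _ _
    _ ≤ (f '' A).ncard + (B \ A).ncard := by gcongr; exact ncard_image_le hB.sdiff

theorem Set.ncard_sub_ncard_image_le_of_subset {α β : Type*} (f : α → β) {A B : Set α}
    (hB : B.Finite) (hAB : A ⊆ B) :
    (A.ncard : ℤ) - (f '' A).ncard ≤ (B.ncard : ℤ) - (f '' B).ncard := by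
  have himage := ncard_image_le_ncard_image_add_ncard_sdiff f hB hAB
  have hsdiff : (B \ A).ncard = B.ncard - A.ncard := ncard_sdiff hAB (hB.subset hAB)
  have hmono : A.ncard ≤ B.ncard := ncard_le_ncard hAB hB
  omega

theorem crange_comp {Ω 𝕏 𝕐 𝕌 : Type*} (g : 𝕏 → 𝕌) (X : Ω → 𝕏) (Y : Ω → 𝕐) (y : 𝕐) :
    crange (g ∘ X) Y y = g '' crange X Y y := by
  ext u
  constructor
  · rintro ⟨ω, hω, rfl⟩
    exact ⟨X ω, ⟨ω, hω, rfl⟩, rfl⟩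
  · rintro ⟨x, ⟨ω, hω, rfl⟩, rfl⟩
    exact ⟨ω, hω, rfl⟩

theorem crange_subset_range {Ω 𝕏 𝕐 : Type*} (X : Ω → 𝕏) (Y : Ω → 𝕐) (y : 𝕐) :
    crange X Y y ⊆ range X :=
  fun _ ⟨ω, _, hω⟩ => ⟨ω, hω⟩

theorem stmt_4_general {Ω 𝕏 𝕐 𝕌 : Type*} (X : Ω → 𝕏) (Y : Ω → 𝕐) (g : 𝕏 → 𝕌)
    (hX : (Set.range X).Finite) :
    ∀ y ∈ Set.range Y,
      ((crange X Y y).ncard : ℤ) - ((crange (g ∘ X) Y y).ncard : ℤ) ≤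
        ((Set.range X).ncard : ℤ) - ((Set.range (g ∘ X)).ncard : ℤ) := by
  intro y _
  rw [crange_comp, range_comp]
  exact ncard_sub_ncard_image_le_of_subset g hX (crange_subset_range X Y y)

theorem stmt_4 {Ω 𝕏 𝕐 𝕌 : Type*} [Nonempty Ω] (X : Ω → 𝕏) (Y : Ω → 𝕐) (g : 𝕏 → 𝕌)
    (hX : (Set.range X).Finite) (hY : (Set.range Y).Finite) :
    ∀ y ∈ Set.range Y,
      ((crange X Y y).ncard : ℤ) - ((crange (g ∘ X) Y y).ncard : ℤ) ≤
        ((Set.range X).ncard : ℤ) - ((Set.range (g ∘ X)).ncard : ℤ) :=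
  stmt_4_general X Y g hX
end

section
/- Let Ω be nonempty, X : Ω → 𝕏 and Y uncertain variables with finite ranges, and let y* ∈ ⟦Y⟧ achieve min_{y∈⟦Y⟧}|⟦X|Y=y⟧|. Define 𝒳₁ = ⟦X | Y = y*⟧, 𝒳₂ = ⟦X⟧ \ 𝒳₁, and g : 𝕏 → 𝕏 ∪ {u*} (u* a fresh symbol not in 𝕏) by g(x) = u* if x ∈ 𝒳₁ and g(x) = x otherwise. Then with U = g ∘ X: |⟦U⟧| = |⟦X⟧| − |⟦X|Y=y*⟧| + 1, min_{y∈⟦Y⟧}|⟦U|Y=y⟧| = 1, and hence L(U → Y) = log₂(|⟦X⟧| − min_{y∈⟦Y⟧}|⟦X|Y=y⟧| + 1). -/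
open Set

theorem stmt_7 {Ω 𝕏 𝕐 : Type*} [Nonempty Ω] (X : Ω → 𝕏) (Y : Ω → 𝕐)
    (hX : (Set.range X).Finite) (hY : (Set.range Y).Finite)
    (ystar : 𝕐) (hystar : ystar ∈ Set.range Y)
    (hmin : (crange X Y ystar).ncard = minCond X Y)
    (g : 𝕏 → 𝕏 ⊕ Unit)
    (hg1 : ∀ x ∈ crange X Y ystar, g x = Sum.inr ())
    (hg2 : ∀ x ∉ crange X Y ystar, g x = Sum.inl x) :
    (Set.range (g ∘ X)).ncard = (Set.range X).ncard - (crange X Y ystar).ncard + 1 ∧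
    minCond (g ∘ X) Y = 1 ∧
    leak (g ∘ X) Y =
      Real.logb 2 (((Set.range X).ncard : ℝ) - (minCond X Y : ℝ) + 1) := by
  set C := crange X Y ystar with hC
  have hsub : C ⊆ Set.range X := by
    rintro x ⟨ω, _, rfl⟩; exact ⟨ω, rfl⟩
  have hCfin : C.Finite := hX.subset hsub
  obtain ⟨ω₀, hω₀⟩ := hystar
  have hystar' : ystar ∈ Set.range Y := ⟨ω₀, hω₀⟩
  have hCne : C.Nonempty := ⟨X ω₀, ω₀, hω₀, rfl⟩
  -- range (g ∘ X)
  have hrange : Set.range (g ∘ X) = Sum.inl '' (Set.range X \ C) ∪ {Sum.inr ()} := by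
    ext z
    constructor
    · rintro ⟨ω, rfl⟩
      by_cases h : X ω ∈ C
      · right; simp [Function.comp, hg1 _ h]
      · left; exact ⟨X ω, ⟨⟨ω, rfl⟩, h⟩, (hg2 _ h).symm⟩
    · rintro (⟨x, ⟨⟨ω, rfl⟩, hx⟩, rfl⟩ | hz)
      · exact ⟨ω, hg2 _ hx⟩
      · simp only [mem_singleton_iff] at hz
        subst hz
        exact ⟨ω₀, hg1 _ ⟨ω₀, hω₀, rfl⟩⟩
  have hdisj : Disjoint (Sum.inl '' (Set.range X \ C)) ({Sum.inr ()} : Set (𝕏 ⊕ Unit)) := by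
    simp [Set.disjoint_singleton_right]
  have hfin1 : (Sum.inl '' (Set.range X \ C) : Set (𝕏 ⊕ Unit)).Finite :=
    ((hX.subset diff_subset).image _)
  have hcard1 : (Set.range (g ∘ X)).ncard = (Set.range X).ncard - C.ncard + 1 := by
    rw [hrange, Set.ncard_union_eq hdisj hfin1 (Set.finite_singleton _),
      Set.ncard_image_of_injective _ Sum.inl_injective, Set.ncard_singleton,
      Set.ncard_diff hsub hCfin]
  -- conditional ranges of g ∘ X
  have hcr : ∀ y, crange (g ∘ X) Y y = g '' crange X Y y := by
    intro y
    ext z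
    constructor
    · rintro ⟨ω, hy, rfl⟩; exact ⟨X ω, ⟨ω, hy, rfl⟩, rfl⟩
    · rintro ⟨x, ⟨ω, hy, rfl⟩, rfl⟩; exact ⟨ω, hy, rfl⟩
  have hcrstar : crange (g ∘ X) Y ystar = {Sum.inr ()} := by
    rw [hcr]
    apply Set.eq_singleton_iff_nonempty_unique_mem.mpr
    refine ⟨hCne.image g, ?_⟩
    rintro z ⟨x, hx, rfl⟩
    exact hg1 _ hx
  have hminC : minCond (g ∘ X) Y = 1 := by
    unfold minCond
    apply le_antisymm
    · apply Nat.sInf_le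
      exact ⟨ystar, hystar', by simp only; rw [hcrstar, Set.ncard_singleton]⟩
    · have hmem := Nat.sInf_mem (s := (fun y => (crange (g ∘ X) Y y).ncard) '' Set.range Y)
        ⟨1, ystar, hystar', by simp only; rw [hcrstar, Set.ncard_singleton]⟩
      obtain ⟨y, ⟨ω, rfl⟩, he⟩ := hmem
      rw [← he]
      have hne : (crange (g ∘ X) Y (Y ω)).Nonempty := ⟨g (X ω), ω, rfl, rfl⟩
      have hfin : (crange (g ∘ X) Y (Y ω)).Finite := by
        apply (hX.image g).subset
        rintro z ⟨ω', _, rfl⟩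
        exact ⟨X ω', ⟨ω', rfl⟩, rfl⟩
      exact (Set.ncard_pos hfin).mpr hne
  refine ⟨hcard1, hminC, ?_⟩
  unfold leak
  rw [hminC, hcard1, ← hmin]
  have hle : C.ncard ≤ (Set.range X).ncard := Set.ncard_le_ncard hsub hX
  push_cast [hle]
  ring_nf
end

section
/- Let Ω be nonempty and X, Y uncertain variables with finite ranges. Then L⋆(X → Y) = 0 if and only if X and Y are unrelated, i.e., ⟦X | Y = y⟧ = ⟦X⟧ for all y ∈ ⟦Y⟧. -/
open Set

theorem stmt_9 {Ω 𝕏 𝕐 : Type*} [Nonempty Ω] (X : Ω → 𝕏) (Y : Ω → 𝕐)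
    (hX : (Set.range X).Finite) (hY : (Set.range Y).Finite) :
    maxLeak X Y = 0 ↔ ∀ y ∈ Set.range Y, crange X Y y = Set.range X := by
  have hsub : ∀ y, crange X Y y ⊆ Set.range X := by
    rintro y x ⟨ω, _, rfl⟩; exact ⟨ω, rfl⟩
  obtain ⟨ω0⟩ := ‹Nonempty Ω›
  have hmemS : (crange X Y (Y ω0)).ncard ∈
      ((fun y => (crange X Y y).ncard) '' Set.range Y) := ⟨Y ω0, ⟨ω0, rfl⟩, rfl⟩
  have hSne : ((fun y => (crange X Y y).ncard) '' Set.range Y).Nonempty := ⟨_, hmemS⟩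
  have hnpos : 1 ≤ (Set.range X).ncard := by
    have : (Set.range X).Nonempty := ⟨X ω0, ω0, rfl⟩
    exact (Set.ncard_pos hX).mpr this
  have hle : ∀ y ∈ Set.range Y, minCond X Y ≤ (crange X Y y).ncard := by
    intro y hy; exact Nat.sInf_le ⟨y, hy, rfl⟩
  have hcle : ∀ y, (crange X Y y).ncard ≤ (Set.range X).ncard := fun y =>
    Set.ncard_le_ncard (hsub y) hX
  have hmle : minCond X Y ≤ (Set.range X).ncard :=
    le_trans (hle _ ⟨ω0, rfl⟩) (hcle _)
  have hmpos : 1 ≤ minCond X Y := by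
    obtain ⟨y, hy, heq⟩ := Nat.sInf_mem hSne
    have : (crange X Y y).Nonempty := by
      obtain ⟨ω, rfl⟩ := hy; exact ⟨X ω, ω, rfl, rfl⟩
    rw [minCond, ← heq]
    exact (Set.ncard_pos (hX.subset (hsub y))).mpr this
  have key : maxLeak X Y = 0 ↔ minCond X Y = (Set.range X).ncard := by
    unfold maxLeak
    constructor
    · intro h
      rcases Real.logb_eq_zero.mp h with h | h | h | h | h | h
      · norm_num at h
      · norm_num at h
      · norm_num at h
      · nlinarith [(Nat.cast_le (α := ℝ)).mpr hmle]
      · have : ((Set.range X).ncard : ℝ) = (minCond X Y : ℝ) := by linarith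
        exact (Nat.cast_injective this).symm
      · nlinarith [(Nat.cast_le (α := ℝ)).mpr hmle]
    · intro h; rw [h]; simp
  rw [key]
  constructor
  · intro h y hy
    exact Set.eq_of_subset_of_ncard_le (hsub y) (h ▸ hle y hy) hX
  · intro h
    obtain ⟨y, hy, heq⟩ := Nat.sInf_mem hSne
    simp only at heq
    rw [minCond, ← heq, h y hy]
end

section
/- There exist a set Ω and uncertain variables X, Y with joint range ⟦X,Y⟧ = {(x₁,y₁),(x₂,y₁),(x₃,y₂)} (x₁,x₂,x₃ distinct, y₁,y₂ distinct) such that L⋆(X → Y) = log₂ 3 while L⋆(Y → X) = log₂ 2; hence maximal non-stochastic brute-force leakage is not symmetric. -/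
open Set

/-!
When some conditional range is a singleton, the minimum in `L⋆` is `1` and `L⋆(X → Y)`
collapses to `log₂ |⟦X⟧|`. In the example `Ω = Fin 3`, `X = id`, `Y = ![0, 0, 1]` this happens
in both directions: `X` determines `Y`, and `⟦X | Y = 1⟧ = {2}`. So the two leakages are
`log₂ |⟦X⟧| = log₂ 3` and `log₂ |⟦Y⟧| = log₂ 2`.
-/

section

variable {Ω 𝕏 𝕐 : Type*} {X : Ω → 𝕏} {Y : Ω → 𝕐}

theorem crange_nonempty (X : Ω → 𝕏) (Y : Ω → 𝕐) (ω : Ω) : (crange X Y (Y ω)).Nonempty :=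
  ⟨X ω, ω, rfl, rfl⟩

theorem crange_of_injective (hX : Function.Injective X) (ω : Ω) :
    crange Y X (X ω) = {Y ω} := by
  ext y
  constructor
  · rintro ⟨ω', hω', rfl⟩
    rw [hX hω']
    rfl
  · rintro rfl
    exact ⟨ω, rfl, rfl⟩

-- `ncard` of an infinite set is `0`, so finiteness of `𝕏` is what keeps the minimum positive.
theorem minCond_eq_one [Finite 𝕏] {ω : Ω} (h : (crange X Y (Y ω)).ncard = 1) :
    minCond X Y = 1 := by
  refine le_antisymm (Nat.sInf_le ⟨Y ω, mem_range_self ω, h⟩) ?_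
  refine le_csInf ((range_nonempty_iff_nonempty.mpr ⟨ω⟩).image _) ?_
  rintro _ ⟨_, ⟨ω', rfl⟩, rfl⟩
  exact (ncard_pos (toFinite _)).mpr (crange_nonempty X Y ω')

theorem maxLeak_of_minCond_eq_one (h : minCond X Y = 1) :
    maxLeak X Y = Real.logb 2 (range X).ncard := by
  simp [maxLeak, h]

end

def exampleX : Fin 3 → Fin 3 := id

def exampleY : Fin 3 → Fin 2 := ![0, 0, 1]

theorem range_exampleX_ncard : (range exampleX).ncard = 3 := by
  simp [exampleX]

theorem range_exampleY_ncard : (range exampleY).ncard = 2 := by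
  have : range exampleY = univ := by
    refine range_eq_univ.mpr fun y => ?_
    fin_cases y
    exacts [⟨0, rfl⟩, ⟨2, rfl⟩]
  simp [this]

theorem crange_exampleX_exampleY_two : crange exampleX exampleY (exampleY 2) = {2} := by
  ext x
  constructor
  · rintro ⟨ω, hω, rfl⟩
    fin_cases ω <;> simp_all [exampleX, exampleY]
  · rintro rfl
    exact ⟨2, rfl, rfl⟩

theorem range_exampleX_exampleY :
    range (fun ω => (exampleX ω, exampleY ω)) = {(0, 0), (1, 0), (2, 1)} := by
  ext ⟨a, b⟩
  constructor
  · rintro ⟨ω, h⟩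
    fin_cases ω <;> simp_all [exampleX, exampleY]
  · simp only [mem_insert_iff, mem_singleton_iff, Prod.ext_iff]
    rintro (⟨rfl, rfl⟩ | ⟨rfl, rfl⟩ | ⟨rfl, rfl⟩)
    exacts [⟨0, rfl⟩, ⟨1, rfl⟩, ⟨2, rfl⟩]

theorem stmt_12 :
    ∃ (Ω : Type) (X : Ω → Fin 3) (Y : Ω → Fin 2),
      Set.range (fun ω => (X ω, Y ω)) = {((0 : Fin 3), (0 : Fin 2)), (1, 0), (2, 1)} ∧
      maxLeak X Y = Real.logb 2 3 ∧ maxLeak Y X = Real.logb 2 2 := by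
  have hXY : minCond exampleX exampleY = 1 := by
    apply minCond_eq_one (ω := 2)
    rw [crange_exampleX_exampleY_two, ncard_singleton]
  have hYX : minCond exampleY exampleX = 1 := by
    apply minCond_eq_one (ω := 0)
    rw [crange_of_injective (X := exampleX) Function.injective_id, ncard_singleton]
  refine ⟨Fin 3, exampleX, exampleY, range_exampleX_exampleY, ?_, ?_⟩
  · rw [maxLeak_of_minCond_eq_one hXY, range_exampleX_ncard, Nat.cast_ofNat]
  · rw [maxLeak_of_minCond_eq_one hYX, range_exampleY_ncard, Nat.cast_ofNat]
end

section
/- Let Ω be nonempty and X, Y uncertain variables with finite ranges. Suppose the map ω ↦ Y(ω) satisfies ε-identifiability: |⟦X | Y = y⟧| ≥ |⟦X⟧| · 2^{−ε} for all y ∈ ⟦Y⟧, where ε > 0. Then L⋆(X → Y) ≤ log₂(|⟦X⟧|(1 − 2^{−ε}) + 1). -/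
open Set

theorem stmt_13 {Ω 𝕏 𝕐 : Type*} [Nonempty Ω] (X : Ω → 𝕏) (Y : Ω → 𝕐)
    (hX : (Set.range X).Finite) (hY : (Set.range Y).Finite)
    (ε : ℝ) (hε : 0 < ε)
    (hid : ∀ y ∈ Set.range Y,
      ((Set.range X).ncard : ℝ) * (2 : ℝ) ^ (-ε) ≤ ((crange X Y y).ncard : ℝ)) :
    maxLeak X Y ≤ Real.logb 2 (((Set.range X).ncard : ℝ) * (1 - (2 : ℝ) ^ (-ε)) + 1) := by

  have hne : ((fun y => (crange X Y y).ncard) '' Set.range Y).Nonempty :=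
    (Set.range_nonempty Y).image _
  obtain ⟨y, hy, hyv⟩ := Nat.sInf_mem hne
  have hmin : ((Set.range X).ncard : ℝ) * (2 : ℝ) ^ (-ε) ≤ (minCond X Y : ℝ) := by
    rw [minCond, ← hyv]; exact hid y hy
  have hkey : ((Set.range X).ncard : ℝ) - (minCond X Y : ℝ) + 1 ≤
      ((Set.range X).ncard : ℝ) * (1 - (2 : ℝ) ^ (-ε)) + 1 := by
    nlinarith [hmin]
  have hpos : (0 : ℝ) < ((Set.range X).ncard : ℝ) - (minCond X Y : ℝ) + 1 := by
    have hsub : crange X Y y ⊆ Set.range X := by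
      rintro x ⟨ω, -, rfl⟩; exact ⟨ω, rfl⟩
    have h1 : (crange X Y y).ncard ≤ (Set.range X).ncard :=
      Set.ncard_le_ncard hsub hX
    have h2 : (minCond X Y : ℝ) ≤ ((Set.range X).ncard : ℝ) := by
      rw [minCond, ← hyv]; exact_mod_cast h1
    linarith
  unfold maxLeak
  exact Real.logb_le_logb_of_le one_lt_two hpos hkey
end

section
/- Let Ω be nonempty, X, Y uncertain variables with finite ranges, and g : 𝕏 → 𝕌 a function with U = g ∘ X such that |⟦U | Y = y⟧| = 1 for every y ∈ ⟦Y⟧ (one-shot perfect guessability). Then L(U → Y) = log₂|⟦U⟧| and there exists a function f : 𝕐 → 𝕌 with U(ω) = f(Y(ω)) for all ω ∈ Ω. -/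
open Set

theorem stmt_14 {Ω 𝕏 𝕐 𝕌 : Type*} [Nonempty Ω] (X : Ω → 𝕏) (Y : Ω → 𝕐) (g : 𝕏 → 𝕌)
    (hX : (Set.range X).Finite) (hY : (Set.range Y).Finite)
    (hone : ∀ y ∈ Set.range Y, (crange (g ∘ X) Y y).ncard = 1) :
    leak (g ∘ X) Y = Real.logb 2 ((Set.range (g ∘ X)).ncard : ℝ) ∧
    ∃ f : 𝕐 → 𝕌, ∀ ω, g (X ω) = f (Y ω) := by
  have hmc : minCond (g ∘ X) Y = 1 := by
    have himg : (fun y => (crange (g ∘ X) Y y).ncard) '' Set.range Y = {1} := by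
      apply Set.eq_singleton_iff_nonempty_unique_mem.mpr
      constructor
      · obtain ⟨ω⟩ := (inferInstance : Nonempty Ω)
        exact ⟨_, ⟨Y ω, ⟨ω, rfl⟩, rfl⟩⟩
      · rintro n ⟨y, hy, rfl⟩
        exact hone y hy
    rw [minCond, himg]
    simp
  constructor
  · rw [leak, hmc]
    simp
  · classical
    refine ⟨fun y => if h : ∃ ω, Y ω = y then g (X h.choose) else
      g (X (Classical.arbitrary Ω)), fun ω => ?_⟩
    have h : ∃ ω', Y ω' = Y ω := ⟨ω, rfl⟩
    simp only [dif_pos h]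
    obtain ⟨u, hu⟩ := Set.ncard_eq_one.mp (hone (Y ω) ⟨ω, rfl⟩)
    have h1 : g (X ω) ∈ crange (g ∘ X) Y (Y ω) := ⟨ω, rfl, rfl⟩
    have h2 : g (X h.choose) ∈ crange (g ∘ X) Y (Y ω) := ⟨h.choose, h.choose_spec, rfl⟩
    rw [hu, Set.mem_singleton_iff] at h1 h2
    rw [h1, h2]
end

section
/- Let Ω be nonempty and X, Y uncertain variables with finite ranges. Then for every function g with U = g ∘ X (U an uncertain variable with finite range), |⟦U⟧| ≤ |⟦Y⟧| · max_{y ∈ ⟦Y⟧} |⟦X | Y = y⟧|, and consequently L(U → Y) ≤ H₀(Y) + H₀(X | Y), where H₀(Y) = log₂|⟦Y⟧| and H₀(X|Y) = max_{y∈⟦Y⟧} log₂|⟦X|Y=y⟧|. Hence L⋆(X → Y) ≤ H₀(Y) + H₀(X|Y). -/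
open Set

theorem stmt_15 {Ω 𝕏 𝕐 : Type*} [Nonempty Ω] (X : Ω → 𝕏) (Y : Ω → 𝕐)
    (hX : (Set.range X).Finite) (hY : (Set.range Y).Finite) :
    (∀ (𝕌 : Type) (g : 𝕏 → 𝕌),
      (Set.range (g ∘ X)).ncard ≤
        (Set.range Y).ncard * sSup ((fun y => (crange X Y y).ncard) '' Set.range Y) ∧
      leak (g ∘ X) Y ≤
        Real.logb 2 ((Set.range Y).ncard : ℝ) +
          Real.logb 2 ((sSup ((fun y => (crange X Y y).ncard) '' Set.range Y) : ℕ) : ℝ)) ∧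
    maxLeak X Y ≤
      Real.logb 2 ((Set.range Y).ncard : ℝ) +
        Real.logb 2 ((sSup ((fun y => (crange X Y y).ncard) '' Set.range Y) : ℕ) : ℝ) := by
  classical
  obtain ⟨ω0⟩ := ‹Nonempty Ω›
  set M : ℕ := sSup ((fun y => (crange X Y y).ncard) '' Set.range Y) with hMdef
  have hcsub : ∀ y, crange X Y y ⊆ Set.range X := by
    rintro y x ⟨ω, _, rfl⟩; exact ⟨ω, rfl⟩
  have hcf : ∀ y, (crange X Y y).Finite := fun y => hX.subset (hcsub y)
  have hbdd : BddAbove ((fun y => (crange X Y y).ncard) '' Set.range Y) :=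
    (hY.image _).bddAbove
  have hMle : ∀ y ∈ Set.range Y, (crange X Y y).ncard ≤ M := fun y hy =>
    le_csSup hbdd ⟨y, hy, rfl⟩
  have hc0ne : (crange X Y (Y ω0)).Nonempty := ⟨X ω0, ω0, rfl, rfl⟩
  have hM1 : 1 ≤ M :=
    le_trans ((Set.ncard_pos (hcf _)).mpr hc0ne) (hMle _ ⟨ω0, rfl⟩)
  have hYne : (Set.range Y).Nonempty := ⟨Y ω0, ω0, rfl⟩
  have hY1 : 1 ≤ (Set.range Y).ncard := (Set.ncard_pos hY).mpr hYne
  -- key combinatorial bound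
  have key : (Set.range X).ncard ≤ (Set.range Y).ncard * M := by
    have hsub : hX.toFinset ⊆ hY.toFinset.biUnion fun y => (hcf y).toFinset := by
      intro x hx
      rw [Set.Finite.mem_toFinset] at hx
      obtain ⟨ω, rfl⟩ := hx
      refine Finset.mem_biUnion.mpr ⟨Y ω, ?_, ?_⟩
      · rw [Set.Finite.mem_toFinset]; exact ⟨ω, rfl⟩
      · rw [Set.Finite.mem_toFinset]; exact ⟨ω, rfl, rfl⟩
    calc (Set.range X).ncard = hX.toFinset.card := Set.ncard_eq_toFinset_card _ hX
      _ ≤ (hY.toFinset.biUnion fun y => (hcf y).toFinset).card :=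
          Finset.card_le_card hsub
      _ ≤ ∑ y ∈ hY.toFinset, ((hcf y).toFinset).card := Finset.card_biUnion_le
      _ ≤ hY.toFinset.card * M := by
          refine Finset.sum_le_card_nsmul _ _ M fun y hy => ?_
          rw [← Set.ncard_eq_toFinset_card _ (hcf y)]
          exact hMle y ((Set.Finite.mem_toFinset _).mp hy)
      _ = (Set.range Y).ncard * M := by rw [Set.ncard_eq_toFinset_card _ hY]
  have hYr : (1 : ℝ) ≤ ((Set.range Y).ncard : ℝ) := by exact_mod_cast hY1
  have hMr : (1 : ℝ) ≤ (M : ℝ) := by exact_mod_cast hM1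
  have hRHS : Real.logb 2 ((Set.range Y).ncard : ℝ) + Real.logb 2 (M : ℝ) =
      Real.logb 2 (((Set.range Y).ncard : ℝ) * (M : ℝ)) :=
    (Real.logb_mul (by linarith) (by linarith)).symm
  have keyR : ((Set.range X).ncard : ℝ) ≤ ((Set.range Y).ncard : ℝ) * (M : ℝ) := by
    exact_mod_cast key
  constructor
  · intro 𝕌 g
    have hgf : (Set.range (g ∘ X)).Finite := by
      rw [Set.range_comp]; exact hX.image g
    have hcsub' : ∀ y, crange (g ∘ X) Y y ⊆ Set.range (g ∘ X) := by
      rintro y x ⟨ω, _, rfl⟩; exact ⟨ω, rfl⟩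
    have h1 : (Set.range (g ∘ X)).ncard ≤ (Set.range X).ncard := by
      rw [Set.range_comp]; exact Set.ncard_image_le hX
    refine ⟨le_trans h1 key, ?_⟩
    have hn1 : 1 ≤ (Set.range (g ∘ X)).ncard :=
      (Set.ncard_pos hgf).mpr ⟨g (X ω0), ω0, rfl⟩
    have hm1 : 1 ≤ minCond (g ∘ X) Y := by
      refine le_csInf (hYne.image _) ?_
      rintro n ⟨y, ⟨ω, rfl⟩, rfl⟩
      exact (Set.ncard_pos ((hgf.subset (hcsub' _)))).mpr ⟨g (X ω), ω, rfl, rfl⟩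
    have hnr : (1 : ℝ) ≤ ((Set.range (g ∘ X)).ncard : ℝ) := by exact_mod_cast hn1
    have hmr : (1 : ℝ) ≤ (minCond (g ∘ X) Y : ℝ) := by exact_mod_cast hm1
    have hle : ((Set.range (g ∘ X)).ncard : ℝ) / (minCond (g ∘ X) Y : ℝ) ≤
        ((Set.range Y).ncard : ℝ) * (M : ℝ) := by
      have hd : ((Set.range (g ∘ X)).ncard : ℝ) / (minCond (g ∘ X) Y : ℝ) ≤
          ((Set.range (g ∘ X)).ncard : ℝ) :=
        div_le_self (by linarith) hmr
      have h2 : ((Set.range (g ∘ X)).ncard : ℝ) ≤ ((Set.range X).ncard : ℝ) := by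
        exact_mod_cast h1
      linarith
    rw [hRHS]
    exact Real.logb_le_logb_of_le one_lt_two (by positivity) hle
  · have hm1 : 1 ≤ minCond X Y := by
      refine le_csInf (hYne.image _) ?_
      rintro n ⟨y, ⟨ω, rfl⟩, rfl⟩
      exact (Set.ncard_pos (hcf _)).mpr ⟨X ω, ω, rfl, rfl⟩
    have hmX : minCond X Y ≤ (Set.range X).ncard :=
      le_trans (Nat.sInf_le ⟨Y ω0, ⟨ω0, rfl⟩, rfl⟩)
        (Set.ncard_le_ncard (hcsub _) hX)
    have hmr : (1 : ℝ) ≤ (minCond X Y : ℝ) := by exact_mod_cast hm1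
    have hmXr : (minCond X Y : ℝ) ≤ ((Set.range X).ncard : ℝ) := by exact_mod_cast hmX
    rw [maxLeak, hRHS]
    exact Real.logb_le_logb_of_le one_lt_two (by linarith) (by linarith)
end

section
/- Let Ω be nonempty and let X₁, Y₁, X₂, Y₂ be uncertain variables with finite ranges such that the pairs (X₁,Y₁) and (X₂,Y₂) are unrelated: the joint range of (X₁,Y₁,X₂,Y₂) equals ⟦X₁,Y₁⟧ × ⟦X₂,Y₂⟧. Then min over (y₁,y₂) ∈ ⟦(Y₁,Y₂)⟧ of |⟦(X₁,X₂) | Y₁=y₁, Y₂=y₂⟧| equals (min_{y₁∈⟦Y₁⟧}|⟦X₁|Y₁=y₁⟧|)·(min_{y₂∈⟦Y₂⟧}|⟦X₂|Y₂=y₂⟧|), and consequently L((X₁,X₂) → (Y₁,Y₂)) = L(X₁ → Y₁) + L(X₂ → Y₂). -/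
open Set

/-! Unrelatedness says that every value of one variable co-occurs with every value of the other,
and it survives applying a function to each variable. Hence the ranges of `(X₁, X₂)` and
`(Y₁, Y₂)` and every conditional range `⟦(X₁, X₂) | (y₁, y₂)⟧` are products; a minimum of products
of independent factors is the product of the minima, and `log₂` turns the product of the two
ratios into a sum. -/

theorem Nat.sInf_image_prod_mul {α β : Type*} {s : Set α} {t : Set β} (hs : s.Nonempty)
    (ht : t.Nonempty) (f : α → ℕ) (g : β → ℕ) :
    sInf ((fun p => f p.1 * g p.2) '' s ×ˢ t) = sInf (f '' s) * sInf (g '' t) := by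
  obtain ⟨a, ha, hfa⟩ := Nat.sInf_mem (hs.image f)
  obtain ⟨b, hb, hgb⟩ := Nat.sInf_mem (ht.image g)
  apply le_antisymm
  · rw [← hfa, ← hgb]
    exact Nat.sInf_le ⟨(a, b), ⟨ha, hb⟩, rfl⟩
  · refine le_csInf ((hs.prod ht).image _) ?_
    rintro _ ⟨⟨a', b'⟩, ⟨ha', hb'⟩, rfl⟩
    exact Nat.mul_le_mul (Nat.sInf_le ⟨a', ha', rfl⟩) (Nat.sInf_le ⟨b', hb', rfl⟩)

section Unrelated

variable {Ω α β : Type*}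

def Unrelated (Z₁ : Ω → α) (Z₂ : Ω → β) : Prop :=
  range (fun ω => (Z₁ ω, Z₂ ω)) = range Z₁ ×ˢ range Z₂

theorem unrelated_iff {Z₁ : Ω → α} {Z₂ : Ω → β} :
    Unrelated Z₁ Z₂ ↔ ∀ ω₁ ω₂, ∃ ω, Z₁ ω = Z₁ ω₁ ∧ Z₂ ω = Z₂ ω₂ := by
  refine ⟨fun h ω₁ ω₂ => ?_, fun h => ?_⟩
  · obtain ⟨ω, hω⟩ : (Z₁ ω₁, Z₂ ω₂) ∈ range fun ω => (Z₁ ω, Z₂ ω) :=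
      h ▸ ⟨mem_range_self ω₁, mem_range_self ω₂⟩
    exact ⟨ω, Prod.ext_iff.mp hω⟩
  · refine Subset.antisymm (range_subset_iff.mpr fun ω => ⟨mem_range_self ω, mem_range_self ω⟩) ?_
    rintro ⟨_, _⟩ ⟨⟨ω₁, rfl⟩, ω₂, rfl⟩
    obtain ⟨ω, h₁, h₂⟩ := h ω₁ ω₂
    exact ⟨ω, Prod.ext h₁ h₂⟩

theorem Unrelated.comp {γ δ : Type*} {Z₁ : Ω → α} {Z₂ : Ω → β} (h : Unrelated Z₁ Z₂)
    (f : α → γ) (g : β → δ) : Unrelated (f ∘ Z₁) (g ∘ Z₂) := by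
  rw [unrelated_iff] at h ⊢
  intro ω₁ ω₂
  obtain ⟨ω, h₁, h₂⟩ := h ω₁ ω₂
  exact ⟨ω, congrArg f h₁, congrArg g h₂⟩

end Unrelated

section Pair

variable {Ω 𝕏₁ 𝕐₁ 𝕏₂ 𝕐₂ : Type*} {X₁ : Ω → 𝕏₁} {Y₁ : Ω → 𝕐₁} {X₂ : Ω → 𝕏₂} {Y₂ : Ω → 𝕐₂}

theorem crange_pair (h : Unrelated (fun ω => (X₁ ω, Y₁ ω)) (fun ω => (X₂ ω, Y₂ ω)))
    (y₁ : 𝕐₁) (y₂ : 𝕐₂) :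
    crange (fun ω => (X₁ ω, X₂ ω)) (fun ω => (Y₁ ω, Y₂ ω)) (y₁, y₂) =
      crange X₁ Y₁ y₁ ×ˢ crange X₂ Y₂ y₂ := by
  ext ⟨x₁, x₂⟩
  simp only [crange, mem_ofPred_eq, mem_prod, Prod.mk.injEq]
  constructor
  · rintro ⟨ω, ⟨hy₁, hy₂⟩, hx₁, hx₂⟩
    exact ⟨⟨ω, hy₁, hx₁⟩, ω, hy₂, hx₂⟩
  · rintro ⟨⟨ω₁, rfl, rfl⟩, ω₂, rfl, rfl⟩
    obtain ⟨ω, h₁, h₂⟩ := unrelated_iff.mp h ω₁ ω₂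
    simp only [Prod.mk.injEq] at h₁ h₂
    exact ⟨ω, ⟨h₁.2, h₂.2⟩, h₁.1, h₂.1⟩

theorem minCond_pair [Nonempty Ω]
    (h : Unrelated (fun ω => (X₁ ω, Y₁ ω)) (fun ω => (X₂ ω, Y₂ ω))) :
    minCond (fun ω => (X₁ ω, X₂ ω)) (fun ω => (Y₁ ω, Y₂ ω)) = minCond X₁ Y₁ * minCond X₂ Y₂ := by
  have hY : Unrelated Y₁ Y₂ := h.comp Prod.snd Prod.snd
  unfold minCond
  rw [hY, ← Nat.sInf_image_prod_mul (range_nonempty Y₁) (range_nonempty Y₂)]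
  refine congrArg sInf (image_congr fun y _ => ?_)
  rw [crange_pair h, ncard_prod]

theorem minCond_pos_s17 [Nonempty Ω] {𝕏 𝕐 : Type*} {X : Ω → 𝕏} (hX : (range X).Finite) (Y : Ω → 𝕐) :
    0 < minCond X Y := by
  obtain ⟨_, ⟨ω, rfl⟩, hmin⟩ := Nat.sInf_mem ((range_nonempty Y).image fun y => (crange X Y y).ncard)
  have hsub : crange X Y (Y ω) ⊆ range X := fun _ ⟨ω', _, hx⟩ => ⟨ω', hx⟩
  rw [minCond, ← hmin, ncard_pos (hX.subset hsub)]
  exact ⟨X ω, ω, rfl, rfl⟩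

theorem leak_pair [Nonempty Ω]
    (h : Unrelated (fun ω => (X₁ ω, Y₁ ω)) (fun ω => (X₂ ω, Y₂ ω)))
    (hX₁ : (range X₁).Finite) (hX₂ : (range X₂).Finite) :
    leak (fun ω => (X₁ ω, X₂ ω)) (fun ω => (Y₁ ω, Y₂ ω)) = leak X₁ Y₁ + leak X₂ Y₂ := by
  have hX : Unrelated X₁ X₂ := h.comp Prod.fst Prod.fst
  have hm₁ := minCond_pos_s17 hX₁ Y₁
  have hm₂ := minCond_pos_s17 hX₂ Y₂
  have ha₁ := (ncard_pos hX₁).mpr (range_nonempty X₁)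
  have ha₂ := (ncard_pos hX₂).mpr (range_nonempty X₂)
  unfold leak
  rw [minCond_pair h, hX, ncard_prod, Nat.cast_mul, Nat.cast_mul, mul_div_mul_comm,
    Real.logb_mul (by positivity) (by positivity)]

end Pair

theorem stmt_17_general {Ω 𝕏₁ 𝕐₁ 𝕏₂ 𝕐₂ : Type*} [Nonempty Ω]
    (X₁ : Ω → 𝕏₁) (Y₁ : Ω → 𝕐₁) (X₂ : Ω → 𝕏₂) (Y₂ : Ω → 𝕐₂)
    (hX₁ : (Set.range X₁).Finite)
    (hX₂ : (Set.range X₂).Finite)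
    (hunrel : Set.range (fun ω => ((X₁ ω, Y₁ ω), (X₂ ω, Y₂ ω))) =
      (Set.range fun ω => (X₁ ω, Y₁ ω)) ×ˢ (Set.range fun ω => (X₂ ω, Y₂ ω))) :
    minCond (fun ω => (X₁ ω, X₂ ω)) (fun ω => (Y₁ ω, Y₂ ω)) =
      minCond X₁ Y₁ * minCond X₂ Y₂ ∧
    leak (fun ω => (X₁ ω, X₂ ω)) (fun ω => (Y₁ ω, Y₂ ω)) =
      leak X₁ Y₁ + leak X₂ Y₂ :=
  ⟨minCond_pair hunrel, leak_pair hunrel hX₁ hX₂⟩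

theorem stmt_17 {Ω 𝕏₁ 𝕐₁ 𝕏₂ 𝕐₂ : Type*} [Nonempty Ω]
    (X₁ : Ω → 𝕏₁) (Y₁ : Ω → 𝕐₁) (X₂ : Ω → 𝕏₂) (Y₂ : Ω → 𝕐₂)
    (hX₁ : (Set.range X₁).Finite) (hY₁ : (Set.range Y₁).Finite)
    (hX₂ : (Set.range X₂).Finite) (hY₂ : (Set.range Y₂).Finite)
    (hunrel : Set.range (fun ω => ((X₁ ω, Y₁ ω), (X₂ ω, Y₂ ω))) =
      (Set.range fun ω => (X₁ ω, Y₁ ω)) ×ˢ (Set.range fun ω => (X₂ ω, Y₂ ω))) :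
    minCond (fun ω => (X₁ ω, X₂ ω)) (fun ω => (Y₁ ω, Y₂ ω)) =
      minCond X₁ Y₁ * minCond X₂ Y₂ ∧
    leak (fun ω => (X₁ ω, X₂ ω)) (fun ω => (Y₁ ω, Y₂ ω)) =
      leak X₁ Y₁ + leak X₂ Y₂ :=
  stmt_17_general X₁ Y₁ X₂ Y₂ hX₁ hX₂ hunrel
end

section
/- Let Ω be nonempty and X, Y uncertain variables with finite ranges. Then I₀(X;Y) := H₀(X) − H₀(X|Y) ≤ L(X → Y), where H₀(X) = log₂|⟦X⟧| and H₀(X|Y) = max_{y∈⟦Y⟧} log₂|⟦X|Y=y⟧|, with equality if and only if all conditional ranges ⟦X|Y=y⟧, y ∈ ⟦Y⟧, have the same cardinality. -/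
open Set

theorem stmt_18 {Ω 𝕏 𝕐 : Type*} [Nonempty Ω] (X : Ω → 𝕏) (Y : Ω → 𝕐)
    (hX : (Set.range X).Finite) (hY : (Set.range Y).Finite) :
    Real.logb 2 ((Set.range X).ncard : ℝ) -
        Real.logb 2 ((sSup ((fun y => (crange X Y y).ncard) '' Set.range Y) : ℕ) : ℝ) ≤
      leak X Y ∧
    (Real.logb 2 ((Set.range X).ncard : ℝ) -
        Real.logb 2 ((sSup ((fun y => (crange X Y y).ncard) '' Set.range Y) : ℕ) : ℝ) =
      leak X Y ↔
      ∀ y ∈ Set.range Y, ∀ y' ∈ Set.range Y,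
        (crange X Y y).ncard = (crange X Y y').ncard) := by
  set S := ((fun y => (crange X Y y).ncard) '' Set.range Y) with hS
  have hYne : (Set.range Y).Nonempty := Set.range_nonempty Y
  have hSne : S.Nonempty := hYne.image _
  have hSfin : S.Finite := hY.image _
  -- every element of S is positive
  have hpos : ∀ n ∈ S, 0 < n := by
    rintro n ⟨y, ⟨ω, rfl⟩, rfl⟩
    have hnonemp : (crange X Y (Y ω)).Nonempty := ⟨X ω, ω, rfl, rfl⟩
    have hfin : (crange X Y (Y ω)).Finite := by
      apply hX.subset
      rintro x ⟨ω', _, rfl⟩; exact ⟨ω', rfl⟩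
    exact (Set.ncard_pos hfin).mpr hnonemp
  have hinf_mem : sInf S ∈ S := Nat.sInf_mem hSne
  have hsup_mem : sSup S ∈ S := hSne.csSup_mem hSfin
  have hinf_pos : 0 < sInf S := hpos _ hinf_mem
  have hsup_pos : 0 < sSup S := hpos _ hsup_mem
  have hle : sInf S ≤ sSup S := Nat.sInf_le hsup_mem
  have hXpos : 0 < (Set.range X).ncard :=
    (Set.ncard_pos hX).mpr (Set.range_nonempty X)
  have hleak : leak X Y = Real.logb 2 ((Set.range X).ncard : ℝ) -
      Real.logb 2 ((sInf S : ℕ) : ℝ) := by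
    unfold leak minCond
    rw [Real.logb_div (by exact_mod_cast hXpos.ne') (by exact_mod_cast hinf_pos.ne')]
  constructor
  · rw [hleak]
    have : Real.logb 2 ((sInf S : ℕ) : ℝ) ≤ Real.logb 2 ((sSup S : ℕ) : ℝ) :=
      Real.logb_le_logb_of_le (by norm_num) (by exact_mod_cast hinf_pos) (by exact_mod_cast hle)
    linarith
  · rw [hleak]
    constructor
    · intro h
      have hlogeq : Real.logb 2 ((sSup S : ℕ) : ℝ) = Real.logb 2 ((sInf S : ℕ) : ℝ) := by
        linarith
      have hc : ((sSup S : ℕ) : ℝ) = ((sInf S : ℕ) : ℝ) :=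
        Real.logb_injOn_pos (by norm_num)
          (Set.mem_Ioi.mpr (by exact_mod_cast hsup_pos))
          (Set.mem_Ioi.mpr (by exact_mod_cast hinf_pos)) hlogeq
      have heq : sSup S = sInf S := by exact_mod_cast hc
      intro y hy y' hy'
      have h1 : (crange X Y y).ncard ∈ S := ⟨y, hy, rfl⟩
      have h2 : (crange X Y y').ncard ∈ S := ⟨y', hy', rfl⟩
      have e1 : (crange X Y y).ncard = sInf S :=
        le_antisymm (heq ▸ le_csSup hSfin.bddAbove h1) (Nat.sInf_le h1)
      have e2 : (crange X Y y').ncard = sInf S :=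
        le_antisymm (heq ▸ le_csSup hSfin.bddAbove h2) (Nat.sInf_le h2)
      rw [e1, e2]
    · intro h
      obtain ⟨y0, hy0, hinf0⟩ := hinf_mem
      obtain ⟨y1, hy1, hsup1⟩ := hsup_mem
      have : sSup S = sInf S := by rw [← hinf0, ← hsup1]; exact h y1 hy1 y0 hy0
      rw [this]
end
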